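/- Consider the Max-cost game in the HIS setting with 11 agents with values (1,1,2,2,2,2,2,2,2,3,3) and k = 2 coalitions. The unsorted coalition structure {{1,1,3,3},{2,2,2,2,2,2,2}} has social cost 8, and every coalition structure with at most two coalitions whose coalitions carry a different multiset of value-profiles has social cost strictly greater than 8. In particular, every social-cost-minimizing coalition structure of this instance is unsorted. -/

import Mathlib

open Finset

noncomputable section

/-- The coalition with index `c` of the coalition structure given by the assignment `P`
(coalition structures with at most `k` coalitions are modeled as assignments
`P : Fin n → Fin k` of the agents to coalition indices; indices whose coalition is
empty do not count as coalitions). -/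
def coal {n k : ℕ} (P : Fin n → Fin k) (c : Fin k) : Finset (Fin n) :=
  Finset.univ.filter (fun i => P i = c)

/-- Average cost of agent `i` in its coalition: the average distance to the other members.
(An agent alone in its coalition has cost `0/0 = 0`, the happy-in-isolation convention.) -/
def costAVG {n k : ℕ} (v : Fin n → ℝ) (P : Fin n → Fin k) (i : Fin n) : ℝ :=
  (∑ j ∈ (coal P (P i)).erase i, |v i - v j|) / (((coal P (P i)).card : ℝ) - 1)

/-- Maximum cost of agent `i` in its coalition: the maximum distance to the other members.
(An agent alone in its coalition has cost `0`, the happy-in-isolation convention.) -/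
def costMAX {n k : ℕ} (v : Fin n → ℝ) (P : Fin n → Fin k) (i : Fin n) : ℝ :=
  Finset.fold max 0 (fun j => |v i - v j|) ((coal P (P i)).erase i)

/-- Cutoff cost of agent `i` in its coalition: the fraction of other members at
distance strictly more than `lam`. (An agent alone has cost `0/0 = 0`.) -/
def costCUT {n k : ℕ} (lam : ℝ) (v : Fin n → ℝ) (P : Fin n → Fin k) (i : Fin n) : ℝ :=
  ((((coal P (P i)).erase i).filter (fun j => lam < |v i - v j|)).card : ℝ) /
    (((coal P (P i)).card : ℝ) - 1)

/-- The coalition structure obtained when agents `i` and `j` exchange their coalitions. -/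
def swapP {n k : ℕ} (P : Fin n → Fin k) (i j : Fin n) : Fin n → Fin k :=
  Function.update (Function.update P i (P j)) j (P i)

/-- A coalition structure is sorted if whenever two agents lie in the same coalition,
every agent whose value lies between their values lies in that coalition as well. -/
def IsSortedStruct {n k : ℕ} (v : Fin n → ℝ) (P : Fin n → Fin k) : Prop :=
  ∀ i j l : Fin n, P i = P j → v i ≤ v l → v l ≤ v j → P l = P i

/-- The multiset of value-profiles of the coalitions of a structure (one entry per
coalition index; two structures have the same nonempty coalitions up to renaming of
agents with equal values iff their profiles agree). -/
def profile {n k : ℕ} (v : Fin n → ℝ) (P : Fin n → Fin k) : Multiset (Multiset ℝ) :=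
  (Finset.univ.val : Multiset (Fin k)).map (fun c => (coal P c).val.map v)

/-- The 11 agents with values (1,1,2,2,2,2,2,2,2,3,3). -/
def vS11 : Fin 11 → ℝ := ![1, 1, 2, 2, 2, 2, 2, 2, 2, 3, 3]

/-- The coalition structure {{1,1,3,3},{2,2,2,2,2,2,2}}. -/
def PS11 : Fin 11 → Fin 2 := ![0, 0, 1, 1, 1, 1, 1, 1, 1, 0, 0]

namespace MJ

def vZ : Fin 11 → ℤ := ![1, 1, 2, 2, 2, 2, 2, 2, 2, 3, 3]

lemma vcast (i : Fin 11) : vS11 i = (vZ i : ℝ) := by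
  fin_cases i <;> norm_num [vS11, vZ]

lemma vmem (i : Fin 11) : vZ i = 1 ∨ vZ i = 2 ∨ vZ i = 3 := by
  fin_cases i <;> decide

def costZ (P : Fin 11 → Fin 2) (i : Fin 11) : ℤ :=
  Finset.fold max 0 (fun j => |vZ i - vZ j|) ((coal P (P i)).erase i)

lemma fold_cast (f : Fin 11 → ℤ) (s : Finset (Fin 11)) :
    ((s.fold max 0 f : ℤ) : ℝ) = s.fold max 0 (fun j => ((f j : ℤ) : ℝ)) := by
  induction s using Finset.induction_on with
  | empty => simp
  | insert _ _ h ih => rw [Finset.fold_insert h, Finset.fold_insert h, Int.cast_max, ih]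

lemma costcast (P : Fin 11 → Fin 2) (i : Fin 11) :
    costMAX vS11 P i = ((costZ P i : ℤ) : ℝ) := by
  rw [costMAX, costZ, fold_cast]
  apply Finset.fold_congr
  intro j _
  rw [vcast i, vcast j]
  push_cast
  rfl

lemma sumcast (P : Fin 11 → Fin 2) :
    (∑ i, costMAX vS11 P i) = ((∑ i, costZ P i : ℤ) : ℝ) := by
  push_cast
  exact Finset.sum_congr rfl fun i _ => costcast P i

lemma mem_coal {P : Fin 11 → Fin 2} {c : Fin 2} {i : Fin 11} :
    i ∈ coal P c ↔ P i = c := by simp [coal]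

def cnt (P : Fin 11 → Fin 2) (c : Fin 2) (w : ℤ) : ℕ :=
  ((coal P c).filter (fun i => vZ i = w)).card

lemma cnt_ne_zero {P : Fin 11 → Fin 2} {c : Fin 2} {w : ℤ} :
    cnt P c w ≠ 0 ↔ ∃ j, P j = c ∧ vZ j = w := by
  rw [cnt, Ne, Finset.card_eq_zero, ← Ne, ← Finset.nonempty_iff_ne_empty]
  simp [Finset.filter_nonempty_iff, mem_coal]

lemma abs_le_two (i j : Fin 11) : |vZ i - vZ j| ≤ 2 := by
  rcases vmem i with h|h|h <;> rcases vmem j with h'|h'|h' <;> rw [h, h'] <;> norm_num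

lemma cost_le (P : Fin 11 → Fin 2) (i : Fin 11) (d : ℤ) (h0 : 0 ≤ d)
    (h : ∀ j, P j = P i → |vZ i - vZ j| ≤ d) : costZ P i ≤ d := by
  rw [costZ, Finset.fold_max_le]
  exact ⟨h0, fun x hx => h x (mem_coal.mp (Finset.mem_of_mem_erase hx))⟩

lemma le_cost (P : Fin 11 → Fin 2) (i : Fin 11) (d : ℤ) (j : Fin 11) (hj : P j = P i)
    (hne : vZ j ≠ vZ i) (hd : d ≤ |vZ i - vZ j|) : d ≤ costZ P i := by
  rw [costZ, Finset.le_fold_max]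
  exact Or.inr ⟨j, Finset.mem_erase.mpr ⟨fun h => hne (by rw [h]), mem_coal.mpr hj⟩, hd⟩

lemma cost_nonneg (P : Fin 11 → Fin 2) (i : Fin 11) : 0 ≤ costZ P i := by
  rw [costZ, Finset.le_fold_max]; exact Or.inl le_rfl

def g (w : ℤ) (n1 n2 n3 : ℕ) : ℤ :=
  if w = 1 then (if n3 ≠ 0 then 2 else if n2 ≠ 0 then 1 else 0)
  else if w = 3 then (if n1 ≠ 0 then 2 else if n2 ≠ 0 then 1 else 0)
  else (if n1 ≠ 0 ∨ n3 ≠ 0 then 1 else 0)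

lemma cost_eq (P : Fin 11 → Fin 2) (i : Fin 11) :
    costZ P i = g (vZ i) (cnt P (P i) 1) (cnt P (P i) 2) (cnt P (P i) 3) := by
  rcases vmem i with hv|hv|hv
  · rw [hv]; simp only [g]; rw [if_pos trivial]
    by_cases h3 : cnt P (P i) 3 ≠ 0
    · rw [if_pos h3]
      obtain ⟨j, hj, hvj⟩ := cnt_ne_zero.mp h3
      exact le_antisymm (cost_le P i 2 (by norm_num) fun k _ => abs_le_two i k)
        (le_cost P i 2 j hj (by rw [hvj, hv]; norm_num) (by rw [hv, hvj]; norm_num))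
    · rw [if_neg h3]
      by_cases h2 : cnt P (P i) 2 ≠ 0
      · rw [if_pos h2]
        obtain ⟨j, hj, hvj⟩ := cnt_ne_zero.mp h2
        refine le_antisymm (cost_le P i 1 (by norm_num) fun k hk => ?_)
          (le_cost P i 1 j hj (by rw [hvj, hv]; norm_num) (by rw [hv, hvj]; norm_num))
        rcases vmem k with h|h|h
        · rw [hv, h]; norm_num
        · rw [hv, h]; norm_num
        · exact absurd (cnt_ne_zero.mpr ⟨k, hk, h⟩) h3
      · rw [if_neg h2]
        refine le_antisymm (cost_le P i 0 le_rfl fun k hk => ?_) (cost_nonneg P i)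
        rcases vmem k with h|h|h
        · rw [hv, h]; norm_num
        · exact absurd (cnt_ne_zero.mpr ⟨k, hk, h⟩) h2
        · exact absurd (cnt_ne_zero.mpr ⟨k, hk, h⟩) h3
  · rw [hv]; simp only [g]; rw [if_neg (by norm_num : ¬(2:ℤ) = 1), if_neg (by norm_num : ¬(2:ℤ) = 3)]
    by_cases h13 : cnt P (P i) 1 ≠ 0 ∨ cnt P (P i) 3 ≠ 0
    · rw [if_pos h13]
      refine le_antisymm (cost_le P i 1 (by norm_num) fun k _ => ?_) ?_
      · rcases vmem k with h|h|h <;> rw [hv, h] <;> norm_num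
      · rcases h13 with h1 | h3
        · obtain ⟨j, hj, hvj⟩ := cnt_ne_zero.mp h1
          exact le_cost P i 1 j hj (by rw [hvj, hv]; norm_num) (by rw [hv, hvj]; norm_num)
        · obtain ⟨j, hj, hvj⟩ := cnt_ne_zero.mp h3
          exact le_cost P i 1 j hj (by rw [hvj, hv]; norm_num) (by rw [hv, hvj]; norm_num)
    · rw [if_neg h13]
      push_neg at h13
      refine le_antisymm (cost_le P i 0 le_rfl fun k hk => ?_) (cost_nonneg P i)
      rcases vmem k with h|h|h
      · exact absurd (cnt_ne_zero.mpr ⟨k, hk, h⟩) (by simp [h13.1])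
      · rw [hv, h]; norm_num
      · exact absurd (cnt_ne_zero.mpr ⟨k, hk, h⟩) (by simp [h13.2])
  · rw [hv]; simp only [g]; rw [if_pos trivial]
    by_cases h1 : cnt P (P i) 1 ≠ 0
    · rw [if_pos h1]
      obtain ⟨j, hj, hvj⟩ := cnt_ne_zero.mp h1
      exact le_antisymm (cost_le P i 2 (by norm_num) fun k _ => abs_le_two i k)
        (le_cost P i 2 j hj (by rw [hvj, hv]; norm_num) (by rw [hv, hvj]; norm_num))
    · rw [if_neg h1]
      by_cases h2 : cnt P (P i) 2 ≠ 0
      · rw [if_pos h2]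
        obtain ⟨j, hj, hvj⟩ := cnt_ne_zero.mp h2
        refine le_antisymm (cost_le P i 1 (by norm_num) fun k hk => ?_)
          (le_cost P i 1 j hj (by rw [hvj, hv]; norm_num) (by rw [hv, hvj]; norm_num))
        rcases vmem k with h|h|h
        · exact absurd (cnt_ne_zero.mpr ⟨k, hk, h⟩) h1
        · rw [hv, h]; norm_num
        · rw [hv, h]; norm_num
      · rw [if_neg h2]
        refine le_antisymm (cost_le P i 0 le_rfl fun k hk => ?_) (cost_nonneg P i)
        rcases vmem k with h|h|h
        · exact absurd (cnt_ne_zero.mpr ⟨k, hk, h⟩) h1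
        · exact absurd (cnt_ne_zero.mpr ⟨k, hk, h⟩) h2
        · rw [hv, h]; norm_num

def F (a b c : ℕ) : ℤ := a * g 1 a b c + b * g 2 a b c + c * g 3 a b c

lemma vone : Finset.univ.filter (fun i => vZ i = 1) = ({0, 1} : Finset (Fin 11)) := by decide
lemma vtwo : Finset.univ.filter (fun i => vZ i = 2) = ({2,3,4,5,6,7,8} : Finset (Fin 11)) := by decide
lemma vthree : Finset.univ.filter (fun i => vZ i = 3) = ({9, 10} : Finset (Fin 11)) := by decide

lemma sum_g (s : Finset (Fin 11)) (n1 n2 n3 : ℕ) :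
    ∑ i ∈ s, g (vZ i) n1 n2 n3 =
      ((s.filter (fun i => vZ i = 1)).card : ℤ) * g 1 n1 n2 n3 +
      ((s.filter (fun i => vZ i = 2)).card : ℤ) * g 2 n1 n2 n3 +
      ((s.filter (fun i => vZ i = 3)).card : ℤ) * g 3 n1 n2 n3 := by
  rw [← Finset.sum_filter_add_sum_filter_not s (fun i => vZ i = 1),
    ← Finset.sum_filter_add_sum_filter_not (s.filter (fun i => ¬ vZ i = 1)) (fun i => vZ i = 2)]
  have e2 : (s.filter (fun i => ¬ vZ i = 1)).filter (fun i => vZ i = 2) =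
      s.filter (fun i => vZ i = 2) := by
    rw [Finset.filter_filter]
    apply Finset.filter_congr
    intro i _
    constructor
    · exact fun h => h.2
    · intro h; exact ⟨by rw [h]; norm_num, h⟩
  have e3 : (s.filter (fun i => ¬ vZ i = 1)).filter (fun i => ¬ vZ i = 2) =
      s.filter (fun i => vZ i = 3) := by
    rw [Finset.filter_filter]
    apply Finset.filter_congr
    intro i _
    constructor
    · rintro ⟨h1, h2⟩
      rcases vmem i with h|h|h
      · exact absurd h h1
      · exact absurd h h2
      · exact h
    · intro h
      constructor <;> rw [h] <;> norm_num
  rw [e2, e3]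
  have c1 : ∑ i ∈ s.filter (fun i => vZ i = 1), g (vZ i) n1 n2 n3 =
      ((s.filter (fun i => vZ i = 1)).card : ℤ) * g 1 n1 n2 n3 := by
    rw [Finset.sum_congr rfl (fun i hi => by rw [(Finset.mem_filter.mp hi).2]),
      Finset.sum_const, nsmul_eq_mul]
  have c2 : ∑ i ∈ s.filter (fun i => vZ i = 2), g (vZ i) n1 n2 n3 =
      ((s.filter (fun i => vZ i = 2)).card : ℤ) * g 2 n1 n2 n3 := by
    rw [Finset.sum_congr rfl (fun i hi => by rw [(Finset.mem_filter.mp hi).2]),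
      Finset.sum_const, nsmul_eq_mul]
  have c3 : ∑ i ∈ s.filter (fun i => vZ i = 3), g (vZ i) n1 n2 n3 =
      ((s.filter (fun i => vZ i = 3)).card : ℤ) * g 3 n1 n2 n3 := by
    rw [Finset.sum_congr rfl (fun i hi => by rw [(Finset.mem_filter.mp hi).2]),
      Finset.sum_const, nsmul_eq_mul]
  rw [c1, c2, c3]
  ring

lemma total_eq (P : Fin 11 → Fin 2) :
    ∑ i, costZ P i = F (cnt P 0 1) (cnt P 0 2) (cnt P 0 3) + F (cnt P 1 1) (cnt P 1 2) (cnt P 1 3) := by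
  rw [← Finset.sum_fiberwise_of_maps_to (t := Finset.univ) (g := P)
      (fun i _ => Finset.mem_univ (P i)) (costZ P)]
  rw [Fin.sum_univ_two]
  have key : ∀ c : Fin 2, ∑ i ∈ Finset.univ.filter (fun i => P i = c), costZ P i =
      F (cnt P c 1) (cnt P c 2) (cnt P c 3) := by
    intro c
    have : ∀ i ∈ Finset.univ.filter (fun i => P i = c), costZ P i =
        g (vZ i) (cnt P c 1) (cnt P c 2) (cnt P c 3) := by
      intro i hi
      rw [cost_eq P i, (Finset.mem_filter.mp hi).2]
    rw [Finset.sum_congr rfl this, sum_g]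
    have hc : ∀ w, (Finset.univ.filter (fun i => P i = c)).filter (fun i => vZ i = w) =
        (coal P c).filter (fun i => vZ i = w) := fun w => rfl
    rw [F, hc, hc, hc]
    rfl
  rw [key 0, key 1]

lemma cnt_compl (P : Fin 11 → Fin 2) (w : ℤ) :
    cnt P 0 w + cnt P 1 w = (Finset.univ.filter (fun i => vZ i = w)).card := by
  have h : ∀ c : Fin 2, cnt P c w =
      ((Finset.univ.filter (fun i => vZ i = w)).filter (fun i => P i = c)).card := by
    intro c
    rw [cnt, coal, Finset.filter_filter, Finset.filter_filter]
    congr 1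
    apply Finset.filter_congr
    intro i _
    exact and_comm
  rw [h 0, h 1]
  have e : (Finset.univ.filter (fun i => vZ i = w)).filter (fun i => P i = 1) =
      (Finset.univ.filter (fun i => vZ i = w)).filter (fun i => ¬ P i = 0) := by
    apply Finset.filter_congr
    intro i _
    rcases Fin.exists_fin_two.mp ⟨P i, rfl⟩ with hp | hp <;> rw [hp] <;> simp
  rw [e]
  exact Finset.card_filter_add_card_filter_not _

set_option synthInstance.maxSize 2000 in
set_option maxHeartbeats 1000000 in
lemma numeric : ∀ a < 3, ∀ b < 8, ∀ c < 3,
    (a = 2 ∧ b = 0 ∧ c = 2) ∨ (a = 0 ∧ b = 7 ∧ c = 0) ∨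
    8 < F a b c + F (2-a) (7-b) (2-c) := by decide

lemma psd : (∑ i, costZ PS11 i) = 8 := by decide

def mC (a b c : ℕ) : Multiset ℤ :=
  Multiset.replicate a 1 + Multiset.replicate b 2 + Multiset.replicate c 3

lemma count_mC (a b c : ℕ) (w : ℤ) :
    Multiset.count w (mC a b c) =
      (if 1 = w then a else 0) + (if 2 = w then b else 0) + (if 3 = w then c else 0) := by
  simp only [mC, Multiset.count_add, Multiset.count_replicate]

lemma cnt_eq_zero_of (P : Fin 11 → Fin 2) (c : Fin 2) (w : ℤ)
    (h1 : (1:ℤ) ≠ w) (h2 : (2:ℤ) ≠ w) (h3 : (3:ℤ) ≠ w) : cnt P c w = 0 := by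
  rw [cnt, Finset.card_eq_zero, Finset.filter_eq_empty_iff]
  intro i _
  rcases vmem i with h|h|h <;> rw [h] <;> [exact h1; exact h2; exact h3]

lemma coal_val (P : Fin 11 → Fin 2) (c : Fin 2) :
    (coal P c).val.map vZ = mC (cnt P c 1) (cnt P c 2) (cnt P c 3) := by
  ext w
  rw [Multiset.count_map, count_mC]
  have hfc : (coal P c).val.filter (fun j => w = vZ j) =
      (coal P c).val.filter (fun j => vZ j = w) := by
    apply Multiset.filter_congr
    intro x _
    exact eq_comm
  have hcard : ((coal P c).val.filter (fun j => w = vZ j)).card = cnt P c w := by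
    rw [hfc, cnt, Finset.card, Finset.filter_val]
  rw [hcard]
  by_cases h1 : (1:ℤ) = w
  · subst h1; norm_num
  · by_cases h2 : (2:ℤ) = w
    · subst h2; norm_num
    · by_cases h3 : (3:ℤ) = w
      · subst h3; norm_num
      · rw [if_neg h1, if_neg h2, if_neg h3, cnt_eq_zero_of P c w h1 h2 h3]

def profileZ (P : Fin 11 → Fin 2) : Multiset (Multiset ℤ) :=
  (Finset.univ.val : Multiset (Fin 2)).map (fun c => (coal P c).val.map vZ)

lemma profile_cast (P : Fin 11 → Fin 2) :
    profile vS11 P = (profileZ P).map (Multiset.map (fun z : ℤ => (z : ℝ))) := by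
  rw [profile, profileZ, Multiset.map_map]
  apply Multiset.map_congr rfl
  intro c _
  show (coal P c).val.map vS11 = Multiset.map (fun z : ℤ => (z : ℝ)) ((coal P c).val.map vZ)
  rw [Multiset.map_map]
  exact Multiset.map_congr rfl fun i _ => vcast i

lemma profileZ_eq (P : Fin 11 → Fin 2) :
    profileZ P = {mC (cnt P 0 1) (cnt P 0 2) (cnt P 0 3),
                  mC (cnt P 1 1) (cnt P 1 2) (cnt P 1 3)} := by
  rw [profileZ, show (Finset.univ.val : Multiset (Fin 2)) = {0, 1} from rfl]
  rw [show ({0, 1} : Multiset (Fin 2)) = 0 ::ₘ 1 ::ₘ 0 from rfl]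
  rw [Multiset.map_cons, Multiset.map_cons, Multiset.map_zero, coal_val, coal_val]
  rfl

lemma profPS : profileZ PS11 = {mC 2 0 2, mC 0 7 0} := by
  rw [profileZ_eq, show cnt PS11 0 1 = 2 from by decide, show cnt PS11 0 2 = 0 from by decide,
    show cnt PS11 0 3 = 2 from by decide, show cnt PS11 1 1 = 0 from by decide,
    show cnt PS11 1 2 = 7 from by decide, show cnt PS11 1 3 = 0 from by decide]

lemma card_v1 : (Finset.univ.filter (fun i => vZ i = 1)).card = 2 := by rw [vone]; rfl
lemma card_v2 : (Finset.univ.filter (fun i => vZ i = 2)).card = 7 := by rw [vtwo]; rfl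
lemma card_v3 : (Finset.univ.filter (fun i => vZ i = 3)).card = 2 := by rw [vthree]; rfl

lemma count_mC1 (a b c : ℕ) : Multiset.count (1:ℤ) (mC a b c) = a := by rw [count_mC]; norm_num
lemma count_mC2 (a b c : ℕ) : Multiset.count (2:ℤ) (mC a b c) = b := by rw [count_mC]; norm_num
lemma count_mC3 (a b c : ℕ) : Multiset.count (3:ℤ) (mC a b c) = c := by rw [count_mC]; norm_num

lemma mC_inj {a b c a' b' c' : ℕ} (h : mC a b c = mC a' b' c') : a = a' ∧ b = b' ∧ c = c' :=
  ⟨by rw [← count_mC1 a b c, h, count_mC1], by rw [← count_mC2 a b c, h, count_mC2],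
   by rw [← count_mC3 a b c, h, count_mC3]⟩

lemma cnt_sum1 (P : Fin 11 → Fin 2) : cnt P 0 1 + cnt P 1 1 = 2 := by rw [cnt_compl, card_v1]
lemma cnt_sum2 (P : Fin 11 → Fin 2) : cnt P 0 2 + cnt P 1 2 = 7 := by rw [cnt_compl, card_v2]
lemma cnt_sum3 (P : Fin 11 → Fin 2) : cnt P 0 3 + cnt P 1 3 = 2 := by rw [cnt_compl, card_v3]

lemma prof_of_counts (P : Fin 11 → Fin 2)
    (h : (cnt P 0 1 = 2 ∧ cnt P 0 2 = 0 ∧ cnt P 0 3 = 2) ∨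
         (cnt P 0 1 = 0 ∧ cnt P 0 2 = 7 ∧ cnt P 0 3 = 0)) :
    profileZ P = profileZ PS11 := by
  have h1 := cnt_sum1 P; have h2 := cnt_sum2 P; have h3 := cnt_sum3 P
  rw [profileZ_eq, profPS]
  rcases h with ⟨ha, hb, hc⟩ | ⟨ha, hb, hc⟩
  · rw [ha, hb, hc, show cnt P 1 1 = 0 by omega, show cnt P 1 2 = 7 by omega,
      show cnt P 1 3 = 0 by omega]
  · rw [ha, hb, hc, show cnt P 1 1 = 2 by omega, show cnt P 1 2 = 0 by omega,
      show cnt P 1 3 = 2 by omega]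
    exact Multiset.cons_swap _ _ _

lemma three (P : Fin 11 → Fin 2) (h : profile vS11 P ≠ profile vS11 PS11) :
    8 < ∑ i, costZ P i := by
  have h1 := cnt_sum1 P; have h2 := cnt_sum2 P; have h3 := cnt_sum3 P
  rcases numeric (cnt P 0 1) (by omega) (cnt P 0 2) (by omega) (cnt P 0 3) (by omega)
    with hsp | hsp | hlt
  · exact absurd (by rw [profile_cast, profile_cast, prof_of_counts P (Or.inl hsp)]) h
  · exact absurd (by rw [profile_cast, profile_cast, prof_of_counts P (Or.inr hsp)]) h
  · rw [total_eq, show cnt P 1 1 = 2 - cnt P 0 1 by omega,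
      show cnt P 1 2 = 7 - cnt P 0 2 by omega, show cnt P 1 3 = 2 - cnt P 0 3 by omega]
    exact hlt

lemma mem_of_cnt1 (P : Fin 11 → Fin 2) (c : Fin 2) (h : cnt P c 1 = 2) : P 0 = c := by
  have hsub : (coal P c).filter (fun i => vZ i = 1) ⊆
      Finset.univ.filter (fun i => vZ i = 1) :=
    Finset.filter_subset_filter _ (Finset.subset_univ _)
  have heq := Finset.eq_of_subset_of_card_le hsub (by rw [card_v1]; exact h.ge)
  have h0 : (0 : Fin 11) ∈ (coal P c).filter (fun i => vZ i = 1) := by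
    rw [heq, vone]; decide
  exact mem_coal.mp (Finset.mem_of_mem_filter _ h0)

lemma mem_of_cnt3 (P : Fin 11 → Fin 2) (c : Fin 2) (h : cnt P c 3 = 2) : P 9 = c := by
  have hsub : (coal P c).filter (fun i => vZ i = 3) ⊆
      Finset.univ.filter (fun i => vZ i = 3) :=
    Finset.filter_subset_filter _ (Finset.subset_univ _)
  have heq := Finset.eq_of_subset_of_card_le hsub (by rw [card_v3]; exact h.ge)
  have h0 : (9 : Fin 11) ∈ (coal P c).filter (fun i => vZ i = 3) := by
    rw [heq, vthree]; decide
  exact mem_coal.mp (Finset.mem_of_mem_filter _ h0)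

lemma not_mem_of_cnt2 (P : Fin 11 → Fin 2) (c : Fin 2) (h : cnt P c 2 = 0) : P 2 ≠ c :=
  fun hc => (cnt_ne_zero.mpr ⟨2, hc, rfl⟩) h

lemma unsorted_of_profile (P : Fin 11 → Fin 2)
    (h : profile vS11 P = profile vS11 PS11) : ¬ IsSortedStruct vS11 P := by
  have hz : profileZ P = profileZ PS11 := by
    apply Multiset.map_injective (Multiset.map_injective (Int.cast_injective (α := ℝ)))
    rw [← profile_cast, ← profile_cast, h]
  rw [profileZ_eq, profPS] at hz
  have hA : mC 2 0 2 ∈ ({mC (cnt P 0 1) (cnt P 0 2) (cnt P 0 3),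
      mC (cnt P 1 1) (cnt P 1 2) (cnt P 1 3)} : Multiset (Multiset ℤ)) := by
    rw [hz]; exact Multiset.mem_cons_self _ _
  have hcnt : ∃ c : Fin 2, cnt P c 1 = 2 ∧ cnt P c 2 = 0 ∧ cnt P c 3 = 2 := by
    rcases Multiset.mem_cons.mp hA with hA | hA
    · obtain ⟨ha, hb, hc⟩ := mC_inj hA.symm
      exact ⟨0, ha, hb, hc⟩
    · obtain ⟨ha, hb, hc⟩ := mC_inj (Multiset.mem_singleton.mp hA).symm
      exact ⟨1, ha, hb, hc⟩
  obtain ⟨c, h1, h2, h3⟩ := hcnt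
  have hP0 := mem_of_cnt1 P c h1
  have hP9 := mem_of_cnt3 P c h3
  have hP2 := not_mem_of_cnt2 P c h2
  intro hs
  have := hs 0 9 2 (by rw [hP0, hP9])
    (by rw [vcast 0, vcast 2]; exact Int.cast_le.mpr (by decide))
    (by rw [vcast 2, vcast 9]; exact Int.cast_le.mpr (by decide))
  exact hP2 (by rw [this, hP0])

end MJ

/-- for the Max-cost game (HIS) with values (1,1,2,2,2,2,2,2,2,3,3) and
k = 2 coalitions, the unsorted structure {{1,1,3,3},{2,2,2,2,2,2,2}} has social cost 8,
every structure with at most two coalitions carrying a different multiset of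
value-profiles has social cost strictly greater than 8, and consequently every
social-cost-minimizing coalition structure of this instance is unsorted. -/
theorem max_jump_unsorted_optimum :
    (¬ IsSortedStruct vS11 PS11) ∧
    ((∑ i, costMAX vS11 PS11 i) = 8) ∧
    (∀ P : Fin 11 → Fin 2, profile vS11 P ≠ profile vS11 PS11 →
      (8 : ℝ) < ∑ i, costMAX vS11 P i) ∧
    (∀ P : Fin 11 → Fin 2,
      (∀ Q : Fin 11 → Fin 2, (∑ i, costMAX vS11 P i) ≤ ∑ i, costMAX vS11 Q i) →
      ¬ IsSortedStruct vS11 P) := by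
  have part2 : (∑ i, costMAX vS11 PS11 i) = 8 := by
    rw [MJ.sumcast, MJ.psd]; norm_num
  have part3 : ∀ P : Fin 11 → Fin 2, profile vS11 P ≠ profile vS11 PS11 →
      (8 : ℝ) < ∑ i, costMAX vS11 P i := by
    intro P h
    have := MJ.three P h
    rw [MJ.sumcast]
    exact_mod_cast this
  refine ⟨?_, part2, part3, ?_⟩
  · intro h
    have := h 0 9 2 rfl
      (by rw [MJ.vcast 0, MJ.vcast 2]; exact Int.cast_le.mpr (by decide))
      (by rw [MJ.vcast 2, MJ.vcast 9]; exact Int.cast_le.mpr (by decide))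
    exact absurd this (by decide)
  · intro P hmin hs
    by_cases hp : profile vS11 P = profile vS11 PS11
    · exact MJ.unsorted_of_profile P hp hs
    · have h1 := part3 P hp
      have h2 := hmin PS11
      rw [part2] at h2
      linarith
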